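/- arXiv:1909.02644 — 2 statements merged into one kernel-verified Lean document; each statement's English description precedes it below -/
import Mathlib

section
/- Let $\Psi:\mathbb{R}\to(0,1)$ be a cumulative distribution function, and let $y$ be a real random variable with missingness indicator $r\in\{0,1\}$ satisfying $\Pr(r=1\mid y)=\Psi\{\alpha(y-\delta)\}$ for fixed $\alpha>0$, $\delta\in\mathbb{R}$. Suppose $A$ is a random vector in $\mathbb{R}^s$ with $r$ conditionally independent of $A$ given $y$, and suppose $\mathbb{E}\big[\|(1,A^T)^T\| / \Psi\{\alpha(y-\delta)\}\big]<\infty$. Then $\mathbb{E}\big[(1,A^T)^T\big(1 - r\,[\Psi\{\alpha(y-\delta)\}]^{-1}\big)\big]=0$. -/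
open MeasureTheory ProbabilityTheory

/-!
Inverse probability weighting. Write `w = Ψ(α(y - δ)) = E[r ∣ y]` and let `X` be a coordinate of
`(1, Aᵀ)ᵀ`. Conditional independence of `X` and `r` given `y` makes `E[X r ∣ y] = E[X ∣ y] w`,
and since `w` is `σ(y)`-measurable and positive it can be pulled out of the conditional expectation:
`E[X r / w] = E[E[X r ∣ y] / w] = E[E[X ∣ y]] = E[X]`.
-/

namespace ProbabilityTheory.CondIndepFun

variable {Ω : Type*} {m mΩ : MeasurableSpace Ω} [StandardBorelSpace Ω] {hm : m ≤ mΩ}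
  {μ : Measure Ω} [IsFiniteMeasure μ] {X Y : Ω → ℝ}

/-- Almost every conditional law `condExpKernel μ m ω` makes `X` and `Y` independent, so the
conditional expectation of the product factors. -/
theorem condExp_mul (hXY : CondIndepFun m hm X Y μ) (hX : Measurable X) (hY : Measurable Y)
    (hX_int : Integrable X μ) (hY_int : Integrable Y μ) (hXY_int : Integrable (X * Y) μ) :
    μ[X * Y | m] =ᵐ[μ] μ[X | m] * μ[Y | m] := by
  have hlaw := (condIndepFun_iff_map_prod_eq_prod_map_map hX hY).1 hXY
  filter_upwards [condExp_ae_eq_integral_condExpKernel hm hXY_int,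
    condExp_ae_eq_integral_condExpKernel hm hX_int, condExp_ae_eq_integral_condExpKernel hm hY_int,
    ae_of_ae_trim hm hlaw] with ω hXYω hXω hYω hlawω
  have hindep : IndepFun X Y (condExpKernel μ m ω) := by
    rw [indepFun_iff_map_prod_eq_prod_map_map hX.aemeasurable hY.aemeasurable,
      ← Kernel.map_apply _ (hX.prodMk hY), hlawω, Kernel.prod_apply, Kernel.map_apply _ hX,
      Kernel.map_apply _ hY]
  rw [hXYω, Pi.mul_apply, hXω, hYω]
  exact hindep.integral_fun_mul_eq_mul_integral hX.aestronglyMeasurable hY.aestronglyMeasurable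

theorem integral_mul_div_eq_integral {w : Ω → ℝ} (hXY : CondIndepFun m hm X Y μ)
    (hX : Measurable X) (hY : Measurable Y) (hYw : μ[Y | m] =ᵐ[μ] w) (hw : ∀ᵐ ω ∂μ, w ω ≠ 0)
    (hX_int : Integrable X μ) (hY_int : Integrable Y μ) (hXY_int : Integrable (X * Y) μ)
    (hXYw_int : Integrable (fun ω => X ω * Y ω / w ω) μ) :
    ∫ ω, X ω * Y ω / w ω ∂μ = ∫ ω, X ω ∂μ := by
  have hinv : (fun ω => X ω * Y ω / w ω) =ᵐ[μ] (μ[Y | m])⁻¹ * (X * Y) := by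
    filter_upwards [hYw] with ω hω
    simp [hω, div_eq_inv_mul]
  have hpull : μ[(μ[Y | m])⁻¹ * (X * Y) | m] =ᵐ[μ] (μ[Y | m])⁻¹ * μ[X * Y | m] :=
    condExp_mul_of_stronglyMeasurable_left
      stronglyMeasurable_condExp.measurable.inv.stronglyMeasurable
      ((integrable_congr hinv).1 hXYw_int) hXY_int
  calc ∫ ω, X ω * Y ω / w ω ∂μ
      = ∫ ω, μ[(μ[Y | m])⁻¹ * (X * Y) | m] ω ∂μ := by
        rw [integral_condExp hm, integral_congr_ae hinv]
    _ = ∫ ω, μ[X | m] ω ∂μ := by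
        refine integral_congr_ae ?_
        filter_upwards [hpull, hXY.condExp_mul hX hY hX_int hY_int hXY_int, hYw, hw]
          with ω hpullω hmulω hYwω hwω
        rw [hpullω, Pi.mul_apply, hmulω, Pi.mul_apply, Pi.inv_apply, hYwω]
        field_simp
    _ = ∫ ω, X ω ∂μ := integral_condExp hm

end ProbabilityTheory.CondIndepFun

theorem stmt0_general {Ω : Type*} [MeasurableSpace Ω] [StandardBorelSpace Ω]
    (μ : Measure Ω) [IsProbabilityMeasure μ]
    {s : ℕ} (y r : Ω → ℝ) (A : Ω → (Fin s → ℝ))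
    (Ψ : ℝ → ℝ) (α δ : ℝ)
    (hΨ_pos : ∀ x, 0 < Ψ x) (hΨ_lt_one : ∀ x, Ψ x < 1) (hΨ_mono : Monotone Ψ)
    (hy : Measurable y) (hr : Measurable r) (hA : Measurable A)
    (hr01 : ∀ ω, r ω = 0 ∨ r ω = 1)
    -- the missingness mechanism: E[r ∣ σ(y)] = Ψ(α (y - δ))
    (hmech : μ[r | MeasurableSpace.comap y inferInstance]
      =ᵐ[μ] fun ω => Ψ (α * (y ω - δ)))
    -- r is conditionally independent of A given y
    (hci : CondIndepFun (MeasurableSpace.comap y inferInstance) (hy.comap_le) r A μ)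
    -- integrability: E[‖(1, Aᵀ)ᵀ‖ / Ψ(α(y-δ))] < ∞
    (hint : Integrable
      (fun ω => ‖(Fin.cons (1 : ℝ) (A ω) : Fin (s + 1) → ℝ)‖ / Ψ (α * (y ω - δ))) μ) :
    ∀ i : Fin (s + 1),
      ∫ ω, (Fin.cons (1 : ℝ) (A ω) : Fin (s + 1) → ℝ) i * (1 - r ω / Ψ (α * (y ω - δ))) ∂μ = 0 := by
  intro i
  set w : Ω → ℝ := fun ω => Ψ (α * (y ω - δ))
  set g : (Fin s → ℝ) → ℝ := fun a => (Fin.cons (1 : ℝ) a : Fin (s + 1) → ℝ) i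
  have hg : Measurable g := by fun_prop
  have hg_le (ω : Ω) : ‖g (A ω)‖ ≤ ‖(Fin.cons (1 : ℝ) (A ω) : Fin (s + 1) → ℝ)‖ :=
    norm_le_pi_norm (Fin.cons (1 : ℝ) (A ω) : Fin (s + 1) → ℝ) i
  have hgr_le (ω : Ω) : ‖g (A ω) * r ω‖ ≤ ‖g (A ω)‖ := by rcases hr01 ω with h | h <;> simp [h]
  have hX_int : Integrable (fun ω => g (A ω)) μ :=
    hint.mono' (hg.comp hA).aestronglyMeasurable (.of_forall fun ω =>
      (hg_le ω).trans (le_div_self (norm_nonneg _) (hΨ_pos _) (hΨ_lt_one _).le))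
  have hr_int : Integrable r μ := (integrable_const (1 : ℝ)).mono' hr.aestronglyMeasurable
    (.of_forall fun ω => by rcases hr01 ω with h | h <;> simp [h])
  have hXr_div_int : Integrable (fun ω => g (A ω) * r ω / w ω) μ := by
    have hw : Measurable w := hΨ_mono.measurable.comp (by fun_prop)
    refine hint.mono' (((hg.comp hA).mul hr).div hw).aestronglyMeasurable (.of_forall fun ω => ?_)
    rw [norm_div, Real.norm_of_nonneg (hΨ_pos _).le]
    exact div_le_div_of_nonneg_right ((hgr_le ω).trans (hg_le ω)) (hΨ_pos _).le
  have hipw : ∫ ω, g (A ω) * r ω / w ω ∂μ = ∫ ω, g (A ω) ∂μ :=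
    (hci.symm.comp hg measurable_id).integral_mul_div_eq_integral (hg.comp hA) hr hmech
      (.of_forall fun _ => (hΨ_pos _).ne') hX_int hr_int
      (hX_int.norm.mono' ((hg.comp hA).mul hr).aestronglyMeasurable (.of_forall hgr_le))
      hXr_div_int
  calc ∫ ω, g (A ω) * (1 - r ω / w ω) ∂μ = ∫ ω, g (A ω) - g (A ω) * r ω / w ω ∂μ := by
        congr 1 with ω; ring
    _ = 0 := by rw [integral_sub hX_int hXr_div_int, hipw, sub_self]

/-- the IV-GMM moment condition. If `Pr(r = 1 ∣ y) = Ψ(α (y - δ))`,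
`r` is conditionally independent of the instrument `A` given `y`, and the weighted
instrument vector is integrable, then the moment function
`h = (1, Aᵀ)ᵀ (1 - r / Ψ(α(y - δ)))` has mean zero. -/
theorem stmt0 {Ω : Type*} [MeasurableSpace Ω] [StandardBorelSpace Ω]
    (μ : Measure Ω) [IsProbabilityMeasure μ]
    {s : ℕ} (y r : Ω → ℝ) (A : Ω → (Fin s → ℝ))
    (Ψ : ℝ → ℝ) (α δ : ℝ) (hα : 0 < α)
    (hΨ_pos : ∀ x, 0 < Ψ x) (hΨ_lt_one : ∀ x, Ψ x < 1) (hΨ_mono : Monotone Ψ)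
    (hy : Measurable y) (hr : Measurable r) (hA : Measurable A)
    (hr01 : ∀ ω, r ω = 0 ∨ r ω = 1)
    -- the missingness mechanism: E[r ∣ σ(y)] = Ψ(α (y - δ))
    (hmech : μ[r | MeasurableSpace.comap y inferInstance]
      =ᵐ[μ] fun ω => Ψ (α * (y ω - δ)))
    -- r is conditionally independent of A given y
    (hci : CondIndepFun (MeasurableSpace.comap y inferInstance) (hy.comap_le) r A μ)
    -- integrability: E[‖(1, Aᵀ)ᵀ‖ / Ψ(α(y-δ))] < ∞
    (hint : Integrable
      (fun ω => ‖(Fin.cons (1 : ℝ) (A ω) : Fin (s + 1) → ℝ)‖ / Ψ (α * (y ω - δ))) μ) :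
    ∀ i : Fin (s + 1),
      ∫ ω, (Fin.cons (1 : ℝ) (A ω) : Fin (s + 1) → ℝ) i * (1 - r ω / Ψ (α * (y ω - δ))) ∂μ = 0 :=
  stmt0_general μ y r A Ψ α δ hΨ_pos hΨ_lt_one hΨ_mono hy hr hA hr01 hmech hci hint
end

section
/- Fix $\nu>0$ and let $\Psi = F_\nu$ be the CDF of the t-distribution with $\nu$ degrees of freedom, $\alpha>0$, $\delta\in\mathbb{R}$. There exist constants $a,k>0$ with $k=\nu$ such that $a|x|^\nu F_\nu(x)\to 1$ as $x\to-\infty$. Consequently, if $y$ is a real random variable with $\mathbb{E}|y|^{\nu m}<\infty$ for some integer $m\geq 1$, then $\mathbb{E}\big([F_\nu\{\alpha(y-\delta)\}]^{-m}\big)<\infty$. -/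
open MeasureTheory Real Filter

open Set Topology

/-!
For `t ≠ 0` the Student kernel factors as `(1 + ν / t²) ^ (-(ν + 1) / 2) · ν ^ ((ν + 1) / 2) · |t| ^ (-(ν + 1))`.
On `(-∞, x)` the first factor lies between its value at `x` and `1`, and it tends to `1` as
`x → -∞`; since `∫_{-∞}^x |t| ^ (-(ν + 1)) dt = |x| ^ (-ν) / ν`, the product `|x| ^ ν F(x)` is squeezed
to a positive limit. Any monotone `G` with `a |x| ^ k G(x) → 1` then satisfies
`G(z)⁻¹ ≤ max (2 a |z| ^ k) (G x₀)⁻¹` for all `z`, so `G(α (y - δ))⁻¹ ^ m` is dominated by an affine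
function of `|y| ^ (k m)`.
-/

section PowerTail

variable {s x : ℝ}

lemma integrableOn_Iio_abs_rpow_neg (hs : 0 < s) (hx : x < 0) :
    IntegrableOn (fun t => |t| ^ (-(s + 1))) (Iio x) := by
  have h := (integrableOn_Ioi_rpow_of_lt (by linarith : -(s + 1) < -1) (neg_pos.2 hx)).comp_neg_Iio
  refine h.congr_fun (fun t ht => ?_) measurableSet_Iio
  simp only [abs_of_neg (lt_trans ht hx)]

lemma integral_Iio_abs_rpow_neg (hs : 0 < s) (hx : x < 0) :
    ∫ t in Iio x, |t| ^ (-(s + 1)) = |x| ^ (-s) / s := by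
  have h : ∫ t in Iic x, |t| ^ (-(s + 1)) = ∫ t in Iic x, (-t) ^ (-(s + 1)) :=
    setIntegral_congr_fun measurableSet_Iic fun t ht => by
      rw [abs_of_neg (lt_of_le_of_lt ht hx)]
  rw [← integral_Iic_eq_integral_Iio, h, integral_comp_neg_Iic x fun t => t ^ (-(s + 1)),
    integral_Ioi_rpow_of_lt (by linarith) (neg_pos.2 hx), abs_of_neg hx,
    show -(s + 1) + 1 = -s by ring]
  field_simp

end PowerTail

noncomputable def studentKernel (ν t : ℝ) : ℝ := (1 + t ^ 2 / ν) ^ (-((ν + 1) / 2))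

section StudentKernel

variable {ν x t : ℝ}

lemma studentKernel_pos (hν : 0 ≤ ν) (t : ℝ) : 0 < studentKernel ν t := by
  unfold studentKernel
  positivity

lemma continuous_studentKernel (hν : 0 ≤ ν) : Continuous (studentKernel ν) :=
  Continuous.rpow_const (by fun_prop) fun t => Or.inl (by positivity)

lemma studentKernel_eq (hν : 0 < ν) (ht : t ≠ 0) :
    studentKernel ν t =
      (1 + ν / t ^ 2) ^ (-((ν + 1) / 2)) * ν ^ ((ν + 1) / 2) * |t| ^ (-(ν + 1)) := by
  have ht2 : 0 < t ^ 2 := by positivity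
  have hsplit : 1 + t ^ 2 / ν = t ^ 2 / ν * (1 + ν / t ^ 2) := by
    field_simp
    ring
  have hpow : (t ^ 2 / ν) ^ (-((ν + 1) / 2)) = ν ^ ((ν + 1) / 2) * |t| ^ (-(ν + 1)) := by
    rw [div_rpow ht2.le hν.le, ← sq_abs, ← rpow_natCast, ← rpow_mul (abs_nonneg t),
      rpow_neg hν.le]
    push_cast
    ring_nf
    field_simp
  rw [studentKernel, hsplit, mul_rpow (by positivity) (by positivity), hpow]
  ring

lemma studentKernel_le (hν : 0 < ν) (ht : t ≠ 0) :
    studentKernel ν t ≤ ν ^ ((ν + 1) / 2) * |t| ^ (-(ν + 1)) := by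
  rw [studentKernel_eq hν ht, mul_assoc]
  refine mul_le_of_le_one_left (by positivity) (rpow_le_one_of_one_le_of_nonpos ?_ ?_)
  · have : 0 ≤ ν / t ^ 2 := by positivity
    linarith
  · linarith

lemma le_studentKernel (hν : 0 < ν) (hx : x ≠ 0) (hxt : |x| ≤ |t|) :
    (1 + ν / x ^ 2) ^ (-((ν + 1) / 2)) * ν ^ ((ν + 1) / 2) * |t| ^ (-(ν + 1)) ≤
      studentKernel ν t := by
  have ht : t ≠ 0 := abs_pos.1 ((abs_pos.2 hx).trans_le hxt)
  rw [studentKernel_eq hν ht]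
  gcongr ?_ * _ * _
  refine rpow_le_rpow_of_nonpos (by positivity) ?_ (by linarith)
  gcongr 1 + ?_
  exact div_le_div_of_nonneg_left hν.le (by positivity) (sq_le_sq.2 hxt)

lemma integrableOn_studentKernel_Iio (hν : 0 < ν) (x : ℝ) :
    IntegrableOn (studentKernel ν) (Iio x) := by
  have htail : IntegrableOn (studentKernel ν) (Iio (-1)) := by
    refine Integrable.mono' ((integrableOn_Iio_abs_rpow_neg hν (by norm_num)).const_mul
      (ν ^ ((ν + 1) / 2))) (continuous_studentKernel hν.le).aestronglyMeasurable ?_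
    filter_upwards [ae_restrict_mem measurableSet_Iio] with t ht
    rw [norm_of_nonneg (studentKernel_pos hν.le t).le]
    exact studentKernel_le hν (by linarith [show t < -1 from ht])
  exact (htail.union (continuous_studentKernel hν.le).integrableOn_Icc).mono_set
    (Iio_subset_Iio_union_Ico.trans (union_subset_union_right _ Ico_subset_Icc_self))

lemma monotone_setIntegral_studentKernel_Iio (hν : 0 < ν) :
    Monotone fun x => ∫ t in Iio x, studentKernel ν t := fun _ v huv =>
  setIntegral_mono_set (integrableOn_studentKernel_Iio hν v)
    (Eventually.of_forall fun t => (studentKernel_pos hν.le t).le) (Iio_subset_Iio huv).eventuallyLE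

lemma setIntegral_studentKernel_Iio_le (hν : 0 < ν) (hx : x < 0) :
    ∫ t in Iio x, studentKernel ν t ≤ ν ^ ((ν + 1) / 2) * (|x| ^ (-ν) / ν) := calc
  ∫ t in Iio x, studentKernel ν t ≤ ∫ t in Iio x, ν ^ ((ν + 1) / 2) * |t| ^ (-(ν + 1)) :=
    setIntegral_mono_on (integrableOn_studentKernel_Iio hν x)
      ((integrableOn_Iio_abs_rpow_neg hν hx).const_mul _) measurableSet_Iio
      fun t ht => studentKernel_le hν (ne_of_lt (lt_trans ht hx))
  _ = ν ^ ((ν + 1) / 2) * (|x| ^ (-ν) / ν) := by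
    rw [integral_const_mul, integral_Iio_abs_rpow_neg hν hx]

lemma le_setIntegral_studentKernel_Iio (hν : 0 < ν) (hx : x < 0) :
    (1 + ν / x ^ 2) ^ (-((ν + 1) / 2)) * ν ^ ((ν + 1) / 2) * (|x| ^ (-ν) / ν) ≤
      ∫ t in Iio x, studentKernel ν t := calc
  _ = ∫ t in Iio x, (1 + ν / x ^ 2) ^ (-((ν + 1) / 2)) * ν ^ ((ν + 1) / 2) * |t| ^ (-(ν + 1)) := by
    rw [integral_const_mul, integral_Iio_abs_rpow_neg hν hx]
  _ ≤ ∫ t in Iio x, studentKernel ν t :=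
    setIntegral_mono_on ((integrableOn_Iio_abs_rpow_neg hν hx).const_mul _)
      (integrableOn_studentKernel_Iio hν x) measurableSet_Iio
      fun t ht => le_studentKernel hν hx.ne (abs_le_abs_of_nonpos hx.le (le_of_lt ht))

lemma tendsto_abs_rpow_mul_setIntegral_studentKernel_Iio (hν : 0 < ν) :
    Tendsto (fun x => |x| ^ ν * ∫ t in Iio x, studentKernel ν t) atBot
      (𝓝 (ν ^ ((ν + 1) / 2) / ν)) := by
  have hfactor : Tendsto (fun x : ℝ => (1 + ν / x ^ 2) ^ (-((ν + 1) / 2))) atBot (𝓝 1) := by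
    have h : Tendsto (fun x : ℝ => 1 + ν * x⁻¹ ^ 2) atBot (𝓝 (1 + ν * 0 ^ 2)) :=
      tendsto_const_nhds.add (tendsto_const_nhds.mul (tendsto_inv_atBot_zero.pow 2))
    simpa [div_eq_mul_inv] using h.rpow_const (Or.inl (by norm_num))
  have hcancel : ∀ x : ℝ, x < 0 → ∀ c : ℝ,
      |x| ^ ν * (c * (|x| ^ (-ν) / ν)) = c / ν := fun x hx c => by
    rw [rpow_neg (abs_nonneg x)]
    field_simp [(rpow_pos_of_pos (abs_pos.2 hx.ne) ν).ne']
  have hlower := hfactor.mul_const (ν ^ ((ν + 1) / 2) / ν)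
  rw [one_mul] at hlower
  refine tendsto_of_tendsto_of_tendsto_of_le_of_le' hlower tendsto_const_nhds ?_ ?_
  all_goals filter_upwards [eventually_lt_atBot 0] with x hx
  · calc (1 + ν / x ^ 2) ^ (-((ν + 1) / 2)) * (ν ^ ((ν + 1) / 2) / ν)
        = |x| ^ ν * ((1 + ν / x ^ 2) ^ (-((ν + 1) / 2)) * ν ^ ((ν + 1) / 2) * (|x| ^ (-ν) / ν)) := by
          rw [hcancel x hx]
          ring
      _ ≤ _ := by gcongr; exact le_setIntegral_studentKernel_Iio hν hx
  · calc |x| ^ ν * ∫ t in Iio x, studentKernel ν t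
        ≤ |x| ^ ν * (ν ^ ((ν + 1) / 2) * (|x| ^ (-ν) / ν)) := by
          gcongr; exact setIntegral_studentKernel_Iio_le hν hx
      _ = _ := hcancel x hx _

end StudentKernel

section InverseMoments

variable {G : ℝ → ℝ} {a k : ℝ}

lemma Monotone.exists_inv_le_max_of_tendsto (hG : Monotone G) (ha : 0 < a)
    (hlim : Tendsto (fun x => a * |x| ^ k * G x) atBot (𝓝 1)) :
    ∃ D ≥ 0, ∀ z, 0 < G z ∧ (G z)⁻¹ ≤ max (2 * a * |z| ^ k) D := by
  obtain ⟨x₀, hx₀⟩ := eventually_atBot.1 (hlim.eventually (lt_mem_nhds one_half_lt_one))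
  have hpos : ∀ z ≤ x₀, 0 < G z := fun z hz =>
    pos_of_mul_pos_right ((one_half_pos : (0 : ℝ) < 1 / 2).trans (hx₀ z hz)) (by positivity)
  refine ⟨(G x₀)⁻¹, inv_nonneg.2 (hpos x₀ le_rfl).le, fun z => ?_⟩
  rcases le_or_gt z x₀ with hz | hz
  · refine ⟨hpos z hz, le_max_of_le_left ((inv_le_iff_one_le_mul₀ (hpos z hz)).2 ?_)⟩
    linarith [hx₀ z hz]
  · have hle := hG hz.le
    exact ⟨(hpos x₀ le_rfl).trans_le hle, le_max_of_le_right (inv_anti₀ (hpos x₀ le_rfl) hle)⟩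

lemma abs_mul_sub_rpow_le {p : ℝ} (hp : 0 ≤ p) (α w δ : ℝ) :
    |α * (w - δ)| ^ p ≤ (2 * |α|) ^ p * (|w| ^ p + |δ| ^ p) := by
  have hsub : |α * (w - δ)| ≤ 2 * |α| * max |w| |δ| := by
    rw [abs_mul, mul_comm 2, mul_assoc]
    gcongr
    linarith [abs_sub w δ, le_max_left |w| |δ|, le_max_right |w| |δ|]
  have hmax : max |w| |δ| ^ p ≤ |w| ^ p + |δ| ^ p := by
    rcases le_total |w| |δ| with h | h
    · rw [max_eq_right h]; linarith [rpow_nonneg (abs_nonneg w) p]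
    · rw [max_eq_left h]; linarith [rpow_nonneg (abs_nonneg δ) p]
  calc |α * (w - δ)| ^ p ≤ (2 * |α| * max |w| |δ|) ^ p := rpow_le_rpow (abs_nonneg _) hsub hp
    _ = (2 * |α|) ^ p * max |w| |δ| ^ p := mul_rpow (by positivity) (by positivity)
    _ ≤ _ := by gcongr

variable {Ω : Type*} [MeasurableSpace Ω] {μ : Measure Ω} [IsFiniteMeasure μ] {y : Ω → ℝ}

lemma integrable_abs_mul_sub_rpow {p : ℝ} (hp : 0 ≤ p) (hy : AEMeasurable y μ)
    (hmom : Integrable (fun ω => |y ω| ^ p) μ) (α δ : ℝ) :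
    Integrable (fun ω => |α * (y ω - δ)| ^ p) μ := by
  refine Integrable.mono' ((hmom.add (integrable_const (|δ| ^ p))).const_mul ((2 * |α|) ^ p)) ?_
    (ae_of_all _ fun ω => ?_)
  · exact (by fun_prop : AEMeasurable (fun ω => |α * (y ω - δ)| ^ p) μ).aestronglyMeasurable
  · rw [norm_of_nonneg (by positivity)]
    exact abs_mul_sub_rpow_le hp α (y ω) δ

theorem Monotone.integrable_inv_pow_comp_of_tendsto (hG : Monotone G) (ha : 0 < a) (hk : 0 ≤ k)
    (hlim : Tendsto (fun x => a * |x| ^ k * G x) atBot (𝓝 1)) (hy : AEMeasurable y μ)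
    (α δ : ℝ) (m : ℕ) (hmom : Integrable (fun ω => |y ω| ^ (k * m)) μ) :
    Integrable (fun ω => (G (α * (y ω - δ)))⁻¹ ^ m) μ := by
  obtain ⟨D, hD, hbound⟩ := hG.exists_inv_le_max_of_tendsto ha hlim
  have hpow : ∀ z, ‖(G z)⁻¹ ^ m‖ ≤ (2 * a) ^ m * |z| ^ (k * m) + D ^ m := fun z => by
    obtain ⟨hpos, hle⟩ := hbound z
    have hinv : 0 ≤ (G z)⁻¹ := inv_nonneg.2 hpos.le
    rw [norm_of_nonneg (pow_nonneg hinv m), rpow_mul_natCast (abs_nonneg z), ← mul_pow]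
    calc (G z)⁻¹ ^ m ≤ max (2 * a * |z| ^ k) D ^ m := pow_le_pow_left₀ hinv hle m
      _ ≤ (2 * a * |z| ^ k) ^ m + D ^ m := by
        rcases le_total (2 * a * |z| ^ k) D with h | h
        · rw [max_eq_right h]; linarith [pow_nonneg (by positivity : 0 ≤ 2 * a * |z| ^ k) m]
        · rw [max_eq_left h]; linarith [pow_nonneg hD m]
  refine Integrable.mono' (((integrable_abs_mul_sub_rpow (by positivity) hy hmom α δ).const_mul
    ((2 * a) ^ m)).add (integrable_const (D ^ m))) ?_ (ae_of_all _ fun ω => hpow _)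
  exact ((hG.measurable.comp_aemeasurable ((hy.sub_const δ).const_mul α)).inv.pow_const
    m).aestronglyMeasurable

end InverseMoments

theorem stmt9_general (ν : ℝ) (hν : 0 < ν) (cν : ℝ) (hcν : 0 < cν)
    (F : ℝ → ℝ)
    -- F is the CDF of the t distribution with ν degrees of freedom
    (hF : ∀ x, F x = ∫ t in Set.Iio x, cν * (1 + t ^ 2 / ν) ^ (-((ν + 1) / 2)))
    (α δ : ℝ)
    {Ω : Type*} [MeasurableSpace Ω] (μ : Measure Ω) [IsProbabilityMeasure μ]
    (y : Ω → ℝ) (hy : Measurable y) (m : ℕ)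
    (hmom : Integrable (fun ω => |y ω| ^ (ν * m)) μ) :
    (∃ a > 0, Tendsto (fun x => a * |x| ^ ν * F x) atBot (nhds 1)) ∧
      Integrable (fun ω => (F (α * (y ω - δ)))⁻¹ ^ m) μ := by
  have hF' : F = fun x => cν * ∫ t in Iio x, studentKernel ν t :=
    funext fun x => (hF x).trans (integral_const_mul cν _)
  have hνp : 0 < ν ^ ((ν + 1) / 2) := rpow_pos_of_pos hν _
  have ha : 0 < ν / (cν * ν ^ ((ν + 1) / 2)) := by positivity
  have hlim : Tendsto (fun x => ν / (cν * ν ^ ((ν + 1) / 2)) * |x| ^ ν * F x) atBot (𝓝 1) := by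
    have h := (tendsto_abs_rpow_mul_setIntegral_studentKernel_Iio hν).const_mul
      (ν / ν ^ ((ν + 1) / 2))
    rw [div_mul_div_cancel₀ hνp.ne', div_self hν.ne'] at h
    refine h.congr fun x => ?_
    rw [hF']
    field_simp
  have hmono : Monotone F :=
    hF' ▸ (monotone_setIntegral_studentKernel_Iio hν).const_mul hcν.le
  exact ⟨⟨_, ha, hlim⟩,
    hmono.integrable_inv_pow_comp_of_tendsto ha hν.le hlim hy.aemeasurable α δ m hmom⟩

/-- Remark S.3(ii): the left tail of the t-distribution CDF `F_ν`
decays polynomially of order `ν` (there is `a > 0` with `a |x|^ν F_ν(x) → 1` as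
`x → -∞`), and consequently inverse probability weights under `Ψ = F_ν` have finite
`m`-th moments whenever `E|y|^{νm} < ∞`. -/
theorem stmt9 (ν : ℝ) (hν : 0 < ν) (cν : ℝ) (hcν : 0 < cν)
    (F : ℝ → ℝ)
    -- F is the CDF of the t distribution with ν degrees of freedom
    (hF : ∀ x, F x = ∫ t in Set.Iio x, cν * (1 + t ^ 2 / ν) ^ (-((ν + 1) / 2)))
    (hF_cdf : Tendsto F atTop (nhds 1))
    (α δ : ℝ) (hα : 0 < α)
    {Ω : Type*} [MeasurableSpace Ω] (μ : Measure Ω) [IsProbabilityMeasure μ]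
    (y : Ω → ℝ) (hy : Measurable y) (m : ℕ) (hm : 1 ≤ m)
    (hmom : Integrable (fun ω => |y ω| ^ (ν * m)) μ) :
    (∃ a > 0, Tendsto (fun x => a * |x| ^ ν * F x) atBot (nhds 1)) ∧
      Integrable (fun ω => (F (α * (y ω - δ)))⁻¹ ^ m) μ :=
  stmt9_general ν hν cν hcν F hF α δ μ y hy m hmom
end
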